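/- arXiv:2311.10927 — 2 statements merged into one kernel-verified Lean document; each statement's English description precedes it below -/
import Mathlib

section
/- Suppose (a*, μ*, ν*, λ*) is a KKT point of the proportional fairness program at which strict complementary slackness holds, the weights satisfy w_i > 0 and the values satisfy v_{i,m} > 0 for all i,m, and the demands are non-zero (x_{i,m} > 0 for all i,m). If fewer than NM − N of the 2NM + M inequality constraints hold as equalities at a*, then the matrix 𝐌 is not invertible. -/
open Matrix BigOperators

/-- Index type for the `(3NM+M) × (3NM+M)` KKT differential matrix: three blocks of
size `N*M` (for `a`, `μ`, `ν`) and one block of size `M` (for `λ`). -/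
abbrev KKTIdx (N M : ℕ) := (Fin N × Fin M) ⊕ ((Fin N × Fin M) ⊕ ((Fin N × Fin M) ⊕ Fin M))

/-- The block matrix
`𝐌 = [[M1, M2, −M2, −M3], [diag μ*, diag a*, 0, 0], [diag ν*, 0, diag(a*−x), 0],
[diag(λ*)D, 0, 0, diag(Da*−b)]]`
where `M1` is block diagonal with `i`-th `M×M` block `(μ_i − ν_i − λ) v_iᵀ`,
`M2` is block diagonal with `i`-th block `(v_iᵀ a_i) I`, `M3` stacks the blocks
`(v_iᵀ a_i) I` vertically, and `D ∈ ℝ^{M×NM}` has `(Da)_m = ∑ i, a_{i,m}`. -/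
noncomputable def KKTMatrix {N M : ℕ} (v x a mu nu : Fin N → Fin M → ℝ)
    (lam b : Fin M → ℝ) : Matrix (KKTIdx N M) (KKTIdx N M) ℝ :=
  Matrix.of fun r c =>
    match r, c with
    | .inl (i, m), .inl (j, m') =>
        if i = j then (mu i m - nu i m - lam m) * v i m' else 0
    | .inl (i, m), .inr (.inl (j, m')) =>
        if i = j ∧ m = m' then ∑ m'', v i m'' * a i m'' else 0
    | .inl (i, m), .inr (.inr (.inl (j, m'))) =>
        if i = j ∧ m = m' then -(∑ m'', v i m'' * a i m'') else 0
    | .inl (i, m), .inr (.inr (.inr m')) =>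
        if m = m' then -(∑ m'', v i m'' * a i m'') else 0
    | .inr (.inl (i, m)), .inl (j, m') => if i = j ∧ m = m' then mu i m else 0
    | .inr (.inl (i, m)), .inr (.inl (j, m')) => if i = j ∧ m = m' then a i m else 0
    | .inr (.inl _), _ => 0
    | .inr (.inr (.inl (i, m))), .inl (j, m') => if i = j ∧ m = m' then nu i m else 0
    | .inr (.inr (.inl (i, m))), .inr (.inr (.inl (j, m'))) =>
        if i = j ∧ m = m' then a i m - x i m else 0
    | .inr (.inr (.inl _)), _ => 0
    | .inr (.inr (.inr m)), .inl (_, m') => if m = m' then lam m else 0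
    | .inr (.inr (.inr m)), .inr (.inr (.inr m')) =>
        if m = m' then (∑ i, a i m) - b m else 0
    | .inr (.inr (.inr _)), _ => 0

/-- Primal feasibility for the proportional fairness program:
`0 ≤ a ≤ x` and `∑ i, a_{i,m} ≤ b_m`. -/
def PrimalFeasible {N M : ℕ} (x a : Fin N → Fin M → ℝ) (b : Fin M → ℝ) : Prop :=
  (∀ i m, 0 ≤ a i m ∧ a i m ≤ x i m) ∧ ∀ m, ∑ i, a i m ≤ b m

/-- A KKT point of the proportional fairness program: primal feasibility, dual
nonnegativity, stationarity `(μ_i − ν_i − λ)(v_iᵀ a_i) + w_i v_i = 0`, and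
complementary slackness. -/
def IsKKTPoint {N M : ℕ} (w : Fin N → ℝ) (v x : Fin N → Fin M → ℝ) (b : Fin M → ℝ)
    (a mu nu : Fin N → Fin M → ℝ) (lam : Fin M → ℝ) : Prop :=
  PrimalFeasible x a b ∧
  (∀ i m, 0 ≤ mu i m) ∧ (∀ i m, 0 ≤ nu i m) ∧ (∀ m, 0 ≤ lam m) ∧
  (∀ i m, (mu i m - nu i m - lam m) * (∑ m', v i m' * a i m') + w i * v i m = 0) ∧
  (∀ i m, mu i m * a i m = 0) ∧
  (∀ i m, nu i m * (a i m - x i m) = 0) ∧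
  (∀ m, lam m * ((∑ i, a i m) - b m) = 0)

/-- Strict complementary slackness: for every inequality constraint, exactly one of
the multiplier and the constraint slack is zero. -/
def StrictComplementarity {N M : ℕ} (x a mu nu : Fin N → Fin M → ℝ)
    (lam b : Fin M → ℝ) : Prop :=
  (∀ i m, Xor' (mu i m = 0) (a i m = 0)) ∧
  (∀ i m, Xor' (nu i m = 0) (a i m = x i m)) ∧
  (∀ m, Xor' (lam m = 0) ((∑ i, a i m) = b m))

/-- The number of the `2NM + M` inequality constraints `0 ≤ a`, `a ≤ x`, `Da ≤ b`
that hold with equality at `a`. -/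
noncomputable def numTight {N M : ℕ} (x a : Fin N → Fin M → ℝ) (b : Fin M → ℝ) : ℕ :=
  (Finset.univ.filter (fun p : Fin N × Fin M => a p.1 p.2 = 0)).card +
  (Finset.univ.filter (fun p : Fin N × Fin M => a p.1 p.2 = x p.1 p.2)).card +
  (Finset.univ.filter (fun m : Fin M => (∑ i, a i m) = b m)).card

/-!
Every row of `KKTMatrix` lies in the span of the `N` value vectors `(0, …, v_i, …, 0)`, the
`2NM + M` dual rows, and the unit vectors of the tight constraints. Indeed, the dual row of a
constraint is `multiplier • functional + slack • unit vector`, so by complementary slackness its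
unit vector is either that of a tight constraint or a multiple of the row; and the primal row
`(i, m)` is `(μ - ν - λ)_{i,m}` times the `i`-th value vector plus `v_iᵀ a_i` times a combination
of dual unit vectors. Hence the rank is at most `N + 2NM + M + numTight < 3NM + M`.
-/

theorem Matrix.not_isUnit_det_of_row_mem_span {K m ι : Type*} [Field K] [Fintype m]
    [DecidableEq m] [Fintype ι] (A : Matrix m m K) (g : ι → m → K)
    (hrow : ∀ r, A r ∈ Submodule.span K (Set.range g))
    (hcard : Fintype.card ι < Fintype.card m) : ¬ IsUnit A.det := by
  intro hdet
  have hspan : Submodule.span K (Set.range A.row) ≤ Submodule.span K (Set.range g) :=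
    Submodule.span_le.mpr (Set.range_subset_iff.mpr hrow)
  have : Fintype.card m ≤ Fintype.card ι :=
    calc Fintype.card m = A.rank := (A.rank_of_isUnit (A.isUnit_iff_isUnit_det.mpr hdet)).symm
      _ = Module.finrank K (Submodule.span K (Set.range A.row)) := A.rank_eq_finrank_span_row
      _ ≤ Module.finrank K (Submodule.span K (Set.range g)) := Submodule.finrank_mono hspan
      _ ≤ Fintype.card ι := finrank_range_le_card g
  omega

theorem Submodule.mem_of_smul_add_smul_mem {K V : Type*} [DivisionRing K] [AddCommGroup V]
    [Module K V] {W : Submodule K V} {c d : K} {y e : V} (hcd : c = 0 ∨ d = 0)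
    (hmem : c • y + d • e ∈ W) (hd : d = 0 → e ∈ W) : e ∈ W := by
  by_cases hd0 : d = 0
  · exact hd hd0
  · rw [hcd.resolve_right hd0, zero_smul, zero_add] at hmem
    exact (W.smul_mem_iff hd0).mp hmem

/-- The inequality constraints `-a ≤ 0`, `a ≤ x`, `Da ≤ b`, indexed as the dual blocks of
`KKTIdx N M = (Fin N × Fin M) ⊕ ConstraintIdx N M`. -/
abbrev ConstraintIdx (N M : ℕ) := (Fin N × Fin M) ⊕ ((Fin N × Fin M) ⊕ Fin M)

section ProportionalFairness

variable {N M : ℕ}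

def constraintSlack (x a : Fin N → Fin M → ℝ) (b : Fin M → ℝ) : ConstraintIdx N M → ℝ
  | .inl (i, m) => a i m
  | .inr (.inl (i, m)) => a i m - x i m
  | .inr (.inr m) => ∑ i, a i m - b m

def constraintMultiplier (mu nu : Fin N → Fin M → ℝ) (lam : Fin M → ℝ) :
    ConstraintIdx N M → ℝ
  | .inl (i, m) => mu i m
  | .inr (.inl (i, m)) => nu i m
  | .inr (.inr m) => lam m

def constraintFunctional : ConstraintIdx N M → KKTIdx N M → ℝ
  | .inl p => Sum.elim (fun q => if q = p then 1 else 0) 0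
  | .inr (.inl p) => Sum.elim (fun q => if q = p then 1 else 0) 0
  | .inr (.inr m) => Sum.elim (fun q => if q.2 = m then 1 else 0) 0

def valueFunctional (v : Fin N → Fin M → ℝ) (i : Fin N) : KKTIdx N M → ℝ :=
  Sum.elim (fun q => if q.1 = i then v i q.2 else 0) 0

variable {w : Fin N → ℝ} {v x a mu nu : Fin N → Fin M → ℝ} {lam b : Fin M → ℝ}

theorem KKTMatrix_dual_row (r : ConstraintIdx N M) :
    KKTMatrix v x a mu nu lam b (.inr r) =
      constraintMultiplier mu nu lam r • constraintFunctional r +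
        constraintSlack x a b r • Pi.single (.inr r) 1 := by
  funext c
  rcases r with ⟨i, m⟩ | ⟨i, m⟩ | m <;> rcases c with ⟨j, m'⟩ | ⟨j, m'⟩ | ⟨j, m'⟩ | m' <;>
    simp [KKTMatrix, constraintMultiplier, constraintSlack, constraintFunctional,
      Pi.single_apply] <;> grind

theorem KKTMatrix_primal_row (i : Fin N) (m : Fin M) :
    KKTMatrix v x a mu nu lam b (.inl (i, m)) =
      (mu i m - nu i m - lam m) • valueFunctional v i +
        (∑ m', v i m' * a i m') • (Pi.single (.inr (.inl (i, m))) 1 -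
          Pi.single (.inr (.inr (.inl (i, m)))) 1 - Pi.single (.inr (.inr (.inr m))) 1) := by
  funext c
  rcases c with ⟨j, m'⟩ | ⟨j, m'⟩ | ⟨j, m'⟩ | m' <;>
    simp [KKTMatrix, valueFunctional, Pi.single_apply] <;> grind

theorem IsKKTPoint.multiplier_eq_zero_or_slack_eq_zero (h : IsKKTPoint w v x b a mu nu lam)
    (r : ConstraintIdx N M) :
    constraintMultiplier mu nu lam r = 0 ∨ constraintSlack x a b r = 0 := by
  obtain ⟨-, -, -, -, -, hmu, hnu, hlam⟩ := h
  rcases r with ⟨i, m⟩ | ⟨i, m⟩ | m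
  exacts [mul_eq_zero.mp (hmu i m), mul_eq_zero.mp (hnu i m), mul_eq_zero.mp (hlam m)]

theorem card_constraintSlack_eq_zero :
    Fintype.card {r : ConstraintIdx N M // constraintSlack x a b r = 0} = numTight x a b := by
  rw [Fintype.card_subtype, Finset.card_filter, Fintype.sum_sum_type, Fintype.sum_sum_type]
  simp only [numTight, Finset.card_filter, constraintSlack, sub_eq_zero, add_assoc]
  congr! 3

noncomputable def kktRowSpanningFamily (v x a mu nu : Fin N → Fin M → ℝ) (lam b : Fin M → ℝ) :
    ConstraintIdx N M ⊕ (Fin N ⊕ {r : ConstraintIdx N M // constraintSlack x a b r = 0}) →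
      KKTIdx N M → ℝ :=
  Sum.elim (fun r => KKTMatrix v x a mu nu lam b (.inr r))
    (Sum.elim (valueFunctional v) (fun r => Pi.single (.inr r.1) 1))

end ProportionalFairness

theorem kktMatrix_not_invertible_general {N M : ℕ} (w : Fin N → ℝ) (v x : Fin N → Fin M → ℝ)
    (b : Fin M → ℝ) (a mu nu : Fin N → Fin M → ℝ) (lam : Fin M → ℝ)
    (hKKT : IsKKTPoint w v x b a mu nu lam)
    (htight : numTight x a b < N * M - N) :
    ¬ IsUnit (KKTMatrix v x a mu nu lam b).det := by
  set W := Submodule.span ℝ (Set.range (kktRowSpanningFamily v x a mu nu lam b))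
  have hunit_mem (r : ConstraintIdx N M) : Pi.single (.inr r) 1 ∈ W := by
    have hrow : KKTMatrix v x a mu nu lam b (.inr r) ∈ W := Submodule.subset_span ⟨.inl r, rfl⟩
    rw [KKTMatrix_dual_row] at hrow
    exact Submodule.mem_of_smul_add_smul_mem (hKKT.multiplier_eq_zero_or_slack_eq_zero r) hrow
      (fun hr => Submodule.subset_span ⟨.inr (.inr ⟨r, hr⟩), rfl⟩)
  refine Matrix.not_isUnit_det_of_row_mem_span _ (kktRowSpanningFamily v x a mu nu lam b) ?_ ?_
  · rintro (⟨i, m⟩ | r)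
    · rw [KKTMatrix_primal_row]
      exact W.add_mem (W.smul_mem _ (Submodule.subset_span ⟨.inr (.inl i), rfl⟩))
        (W.smul_mem _ (W.sub_mem (W.sub_mem (hunit_mem _) (hunit_mem _)) (hunit_mem _)))
    · exact Submodule.subset_span ⟨.inl r, rfl⟩
  · simp only [Fintype.card_sum, Fintype.card_prod, Fintype.card_fin,
      card_constraintSlack_eq_zero]
    generalize N * M = k at htight ⊢
    omega

/-- If `(a*, μ*, ν*, λ*)` is a KKT point of the proportional fairness
program at which strict complementary slackness holds, the weights are positive, the
values are positive, the demands are nonzero, and fewer than `NM − N` of the `2NM + M`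
inequality constraints hold as equalities at `a*`, then the matrix `𝐌` is not
invertible. -/
theorem kktMatrix_not_invertible {N M : ℕ} (w : Fin N → ℝ) (v x : Fin N → Fin M → ℝ)
    (b : Fin M → ℝ) (a mu nu : Fin N → Fin M → ℝ) (lam : Fin M → ℝ)
    (hKKT : IsKKTPoint w v x b a mu nu lam)
    (hstrict : StrictComplementarity x a mu nu lam b)
    (hw : ∀ i, 0 < w i) (hv : ∀ i m, 0 < v i m) (hx : ∀ i m, 0 < x i m)
    (htight : numTight x a b < N * M - N) :
    ¬ IsUnit (KKTMatrix v x a mu nu lam b).det :=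
  kktMatrix_not_invertible_general w v x b a mu nu lam hKKT htight
end

section
/- The componentwise softmax map is 1-Lipschitz from (ℝ^N, ℓ1) to (ℝ^N, ℓ1): for all u, u' ∈ ℝ^N, Σ_{i=1}^N |softmax_i(u) − softmax_i(u')| ≤ Σ_{i=1}^N |u_i − u'_i|. -/
open BigOperators

/-- The softmax map on `ℝ^N`: `softmax_i(u) = exp(u_i) / ∑ k, exp(u_k)`. -/
noncomputable def softmax {N : ℕ} (u : Fin N → ℝ) (i : Fin N) : ℝ :=
  Real.exp (u i) / ∑ k, Real.exp (u k)

/-!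
For probability vectors `p = softmax u` and `q = softmax u'` one has
`p i - q i = ∑ k, (p i * q k - p k * q i)`, and `log (p i * q k) - log (p k * q i) = d i - d k`
with `d = u - u'`. Each term is bounded by the inequality between the logarithmic and the
arithmetic mean, `|s - t| ≤ (s + t) / 2 * |log s - log t|`. After symmetrization,
`|d i - d k| ≤ |d i| + |d k|` off the diagonal leaves `|d i|` with the weight
`p i * (1 - q i) + q i * (1 - p i) ≤ 1`.
-/

open Finset Real

lemma two_mul_sub_div_add_le_log_sub_log {s t : ℝ} (ht : 0 < t) (hts : t ≤ s) :
    2 * (s - t) / (s + t) ≤ log s - log t := by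
  have hx : 0 ≤ s / t - 1 := by rw [sub_nonneg, le_div_iff₀ ht]; linarith
  have key := le_log_one_add_of_nonneg hx
  rw [add_sub_cancel, log_div (ht.trans_le hts).ne' ht.ne'] at key
  convert key using 1
  field_simp
  ring

lemma abs_sub_le_add_div_two_mul_abs_log_sub_log {s t : ℝ} (hs : 0 < s) (ht : 0 < t) :
    |s - t| ≤ (s + t) / 2 * |log s - log t| := by
  wlog hts : t ≤ s generalizing s t
  · simpa only [abs_sub_comm, add_comm] using this ht hs (le_of_not_ge hts)
  have key := two_mul_sub_div_add_le_log_sub_log ht hts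
  rw [div_le_iff₀ (by positivity)] at key
  rw [abs_of_nonneg (sub_nonneg.2 hts), abs_of_nonneg (sub_nonneg.2 (log_le_log ht hts))]
  linarith

section ProbabilityVectors

variable {ι : Type*} [Fintype ι] {p q : ι → ℝ}

lemma sub_eq_sum_mul_sub_mul (hp : ∑ k, p k = 1) (hq : ∑ k, q k = 1) (i : ι) :
    p i - q i = ∑ k, (p i * q k - p k * q i) := by
  rw [sum_sub_distrib, ← mul_sum, ← sum_mul, hp, hq]
  ring

lemma sum_sum_mul_mul_abs_sub_le (hp0 : ∀ i, 0 ≤ p i) (hq0 : ∀ i, 0 ≤ q i)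
    (hp : ∑ k, p k = 1) (hq : ∑ k, q k = 1) (e : ι → ℝ) :
    ∑ i, ∑ k, p i * q k * |e i - e k| ≤ ∑ i, |e i| := by
  have hp1 : ∀ i, p i ≤ 1 := fun i => hp ▸ single_le_sum (fun j _ => hp0 j) (mem_univ i)
  have hq1 : ∀ i, q i ≤ 1 := fun i => hq ▸ single_le_sum (fun j _ => hq0 j) (mem_univ i)
  -- the triangle inequality `|e i - e k| ≤ |e i| + |e k|` is wasteful by `2 |e i|` at `k = i`
  have hdiag : ∀ i, p i * q i * (2 * |e i|) ≤ ∑ k, p i * q k * (|e i| + |e k| - |e i - e k|) := by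
    intro i
    have hnonneg : ∀ k, 0 ≤ p i * q k * (|e i| + |e k| - |e i - e k|) := fun k =>
      mul_nonneg (mul_nonneg (hp0 i) (hq0 k)) (by linarith [abs_sub (e i) (e k)])
    simpa [two_mul] using single_le_sum (fun k _ => hnonneg k) (mem_univ i)
  have hmarg : ∑ i, ∑ k, p i * q k * (|e i| + |e k|) = ∑ i, (p i + q i) * |e i| := by
    have hrow : ∀ i, ∑ k, p i * q k * (|e i| + |e k|) = p i * |e i| + p i * ∑ k, q k * |e k| := by
      intro i
      simp only [mul_add, sum_add_distrib, ← mul_sum, mul_assoc, ← sum_mul, hq]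
      ring
    simp only [hrow, sum_add_distrib, ← sum_mul, hp, add_mul]
    ring
  calc ∑ i, ∑ k, p i * q k * |e i - e k|
      = ∑ i, ∑ k, p i * q k * (|e i| + |e k|)
        - ∑ i, ∑ k, p i * q k * (|e i| + |e k| - |e i - e k|) := by
        simp only [← sum_sub_distrib]
        ring_nf
    _ ≤ ∑ i, (p i + q i) * |e i| - ∑ i, p i * q i * (2 * |e i|) := by
        rw [hmarg]
        gcongr with i
        exact hdiag i
    _ ≤ ∑ i, |e i| := by
        rw [← sum_sub_distrib]
        gcongr with i
        nlinarith [mul_nonneg (mul_nonneg (sub_nonneg.2 (hp1 i)) (sub_nonneg.2 (hq1 i)))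
          (abs_nonneg (e i)), mul_nonneg (mul_nonneg (hp0 i) (hq0 i)) (abs_nonneg (e i))]

theorem sum_abs_sub_le_sum_abs_log_div_sub (hp0 : ∀ i, 0 < p i) (hq0 : ∀ i, 0 < q i)
    (hp : ∑ k, p k = 1) (hq : ∑ k, q k = 1) (c : ℝ) :
    ∑ i, |p i - q i| ≤ ∑ i, |log (p i / q i) - c| := by
  set e : ι → ℝ := fun i => log (p i / q i) - c
  have hpair : ∀ i k, |p i * q k - p k * q i| ≤ (p i * q k + p k * q i) / 2 * |e i - e k| := by
    intro i k
    have hlog : log (p i * q k) - log (p k * q i) = e i - e k := by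
      simp only [e, log_mul (hp0 _).ne' (hq0 _).ne', log_div (hp0 _).ne' (hq0 _).ne']
      ring
    rw [← hlog]
    exact abs_sub_le_add_div_two_mul_abs_log_sub_log (mul_pos (hp0 i) (hq0 k))
      (mul_pos (hp0 k) (hq0 i))
  have hswap : ∑ i, ∑ k, p k * q i * |e i - e k| = ∑ i, ∑ k, p i * q k * |e i - e k| := by
    rw [sum_comm]
    exact sum_congr rfl fun i _ => sum_congr rfl fun k _ => by rw [abs_sub_comm]
  calc ∑ i, |p i - q i| = ∑ i, |∑ k, (p i * q k - p k * q i)| := by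
        simp only [← sub_eq_sum_mul_sub_mul hp hq]
    _ ≤ ∑ i, ∑ k, |p i * q k - p k * q i| := sum_le_sum fun i _ => abs_sum_le_sum_abs _ _
    _ ≤ ∑ i, ∑ k, (p i * q k + p k * q i) / 2 * |e i - e k| := by
        gcongr with i _ k
        exact hpair i k
    _ = ∑ i, ∑ k, p i * q k * |e i - e k| := by
        have hsplit : ∀ i k, (p i * q k + p k * q i) / 2 * |e i - e k|
            = (p i * q k * |e i - e k| + p k * q i * |e i - e k|) / 2 := fun i k => by ring
        simp only [hsplit, ← sum_div, sum_add_distrib, hswap]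
        ring
    _ ≤ ∑ i, |e i| := sum_sum_mul_mul_abs_sub_le (fun i => (hp0 i).le) (fun i => (hq0 i).le) hp hq e

end ProbabilityVectors

lemma sum_exp_pos {ι : Type*} [Fintype ι] [Nonempty ι] (u : ι → ℝ) : 0 < ∑ k, exp (u k) :=
  sum_pos (fun k _ => exp_pos (u k)) univ_nonempty

section Softmax

variable {N : ℕ}

lemma softmax_pos (u : Fin N → ℝ) (i : Fin N) : 0 < softmax u i :=
  have : Nonempty (Fin N) := ⟨i⟩
  div_pos (exp_pos _) (sum_exp_pos u)

lemma sum_softmax [Nonempty (Fin N)] (u : Fin N → ℝ) : ∑ i, softmax u i = 1 := by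
  simp only [softmax, ← sum_div]
  exact div_self (sum_exp_pos u).ne'

lemma log_softmax (u : Fin N → ℝ) (i : Fin N) :
    log (softmax u i) = u i - log (∑ k, exp (u k)) := by
  have : Nonempty (Fin N) := ⟨i⟩
  rw [softmax, log_div (exp_pos _).ne' (sum_exp_pos u).ne', log_exp]

end Softmax

/-- The componentwise softmax map is 1-Lipschitz from `(ℝ^N, ℓ1)` to
`(ℝ^N, ℓ1)`: `∑ i, |softmax_i(u) − softmax_i(u')| ≤ ∑ i, |u_i − u'_i|`. -/
theorem softmax_one_lipschitz_l1 {N : ℕ} (u u' : Fin N → ℝ) :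
    ∑ i, |softmax u i - softmax u' i| ≤ ∑ i, |u i - u' i| := by
  rcases isEmpty_or_nonempty (Fin N) with hN | hN
  · simp
  -- the shift cancels the log-partition functions: `log (softmax u i / softmax u' i) - c = u i - u' i`
  convert sum_abs_sub_le_sum_abs_log_div_sub (softmax_pos u) (softmax_pos u')
    (sum_softmax u) (sum_softmax u') (log (∑ k, exp (u' k)) - log (∑ k, exp (u k))) using 3 with i
  rw [log_div (softmax_pos u i).ne' (softmax_pos u' i).ne', log_softmax, log_softmax]
  ring
end
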